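/- Let n ≥ 3 be an integer and γ ∈ (0, n/2). Suppose v : (0,2) → ℝ is a smooth positive function satisfying the ODE x^{n+1}(1 - x²/4)^{-n} · d/dx [ x^{-n+1}(1 - x²/4)^n · v'(x) ] + (n²/4 - γ²) v(x) = 0 on (0,2), and the auxiliary function h(x) = x^{-n+1}(1 - x²/4)^n v'(x) satisfies lim_{x→2⁻} h(x) = 0. Then v'(x) > 0 for all x ∈ (0,2). -/
import Mathlib


open Real Set

/-- Lemma 4.1: radial monotonicity of the hyperbolic eigenfunction in the ball model. -/
theorem stmt_0 (n : ℕ) (hn : 3 ≤ n) (γ : ℝ) (hγ0 : 0 < γ) (hγn : γ < n / 2)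
    (v h : ℝ → ℝ)
    (hv_smooth : ContDiffOn ℝ (⊤ : ℕ∞) v (Ioo (0:ℝ) 2))
    (hv_pos : ∀ x ∈ Ioo (0:ℝ) 2, 0 < v x)
    (h_def : ∀ x ∈ Ioo (0:ℝ) 2,
      h x = x ^ ((1:ℝ) - n) * (1 - x ^ 2 / 4) ^ (n:ℝ) * deriv v x)
    (h_diff : ∀ x ∈ Ioo (0:ℝ) 2, DifferentiableAt ℝ h x)
    (h_ode : ∀ x ∈ Ioo (0:ℝ) 2,
      x ^ ((n:ℝ) + 1) * (1 - x ^ 2 / 4) ^ (-(n:ℝ)) * deriv h x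
        + ((n:ℝ) ^ 2 / 4 - γ ^ 2) * v x = 0)
    (h_lim : Filter.Tendsto h (nhdsWithin 2 (Iio (2:ℝ))) (nhds 0)) :
    ∀ x ∈ Ioo (0:ℝ) 2, 0 < deriv v x := by
  have hc : (0:ℝ) < (n:ℝ) ^ 2 / 4 - γ ^ 2 := by nlinarith [hγ0, hγn]
  -- positivity of the quadratic weight
  have hq : ∀ x ∈ Ioo (0:ℝ) 2, (0:ℝ) < 1 - x ^ 2 / 4 := by
    intro x hx; nlinarith [hx.1, hx.2]
  -- deriv h < 0 on (0,2)
  have hderiv_neg : ∀ x ∈ Ioo (0:ℝ) 2, deriv h x < 0 := by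
    intro x hx
    have hA : (0:ℝ) < x ^ ((n:ℝ) + 1) * (1 - x ^ 2 / 4) ^ (-(n:ℝ)) :=
      mul_pos (Real.rpow_pos_of_pos hx.1 _) (Real.rpow_pos_of_pos (hq x hx) _)
    have hode := h_ode x hx
    have hv := hv_pos x hx
    by_contra hd
    push_neg at hd
    nlinarith [mul_nonneg hA.le hd, mul_pos hc hv]
  -- h is strictly decreasing on (0,2)
  have hanti : StrictAntiOn h (Ioo (0:ℝ) 2) := by
    apply strictAntiOn_of_deriv_neg (convex_Ioo 0 2)
    · exact fun x hx => (h_diff x hx).continuousAt.continuousWithinAt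
    · intro x hx
      rw [interior_Ioo] at hx
      exact hderiv_neg x hx
  -- h ≥ 0 on (0,2)
  have hnonneg : ∀ x ∈ Ioo (0:ℝ) 2, 0 ≤ h x := by
    intro x hx
    refine le_of_tendsto h_lim ?_
    filter_upwards [Ioo_mem_nhdsLT_of_mem (by exact ⟨hx.2, le_refl 2⟩ : (2:ℝ) ∈ Ioc x 2)]
      with y hy
    exact (hanti hx ⟨lt_trans hx.1 hy.1, hy.2⟩ hy.1).le
  -- h > 0 on (0,2)
  have hpos : ∀ x ∈ Ioo (0:ℝ) 2, 0 < h x := by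
    intro x hx
    obtain ⟨y, hxy, hy2⟩ := exists_between hx.2
    have hyI : y ∈ Ioo (0:ℝ) 2 := ⟨lt_trans hx.1 hxy, hy2⟩
    exact lt_of_le_of_lt (hnonneg y hyI) (hanti hx hyI hxy)
  -- conclude
  intro x hx
  have hB : (0:ℝ) < x ^ ((1:ℝ) - n) * (1 - x ^ 2 / 4) ^ (n:ℝ) :=
    mul_pos (Real.rpow_pos_of_pos hx.1 _) (Real.rpow_pos_of_pos (hq x hx) _)
  have := hpos x hx
  rw [h_def x hx] at this
  by_contra hd
  push_neg at hd
  nlinarith [mul_nonneg hB.le (neg_nonneg.mpr hd)]
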